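/- Let G be a finite simple graph with a perfect matching on 2n vertices, and let S be the polynomial ring over a field K in the 2n vertex variables. Then 2k − 1 ≤ dim S/I(G)^{[k]} ≤ n + k − 1 for all 1 ≤ k ≤ ν(G) = n. In particular, if n ≥ 2, then dim S/I(G)^{[n−1]} ∈ {2n − 3, 2n − 2}. -/

import Mathlib

open MvPolynomial

noncomputable section

namespace Paper

variable (K : Type) [Field K] (V : Type) [Fintype V] [DecidableEq V]

/-- The polynomial ring `S = K[x_v : v ∈ V]`. -/
abbrev Poly := MvPolynomial V K

/-- The graded maximal ideal `𝔪 = (x_v : v ∈ V)`. -/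
def maxIdeal : Ideal (Poly K V) := Ideal.span (Set.range X)

/-- The depth of `S/I` : the maximal length of a regular sequence on `S/I`
consisting of elements of the graded maximal ideal. -/
def smodDepth (I : Ideal (Poly K V)) : ℕ :=
  sSup {r : ℕ | ∃ rs : List (Poly K V), rs.length = r ∧ (∀ x ∈ rs, x ∈ maxIdeal K V) ∧
    RingTheory.Sequence.IsRegular (Poly K V ⧸ I) rs}

/-- `I` is Cohen-Macaulay if `depth S/I = dim S/I`. -/
def IsCM (I : Ideal (Poly K V)) : Prop :=
  ((smodDepth K V I : ℕ∞) : WithBot ℕ∞) = ringKrullDim (Poly K V ⧸ I)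

/-- The height of an ideal: the infimum of the heights of the primes containing it. -/
def idealHeight (I : Ideal (Poly K V)) : ℕ∞ :=
  ⨅ (P : PrimeSpectrum (Poly K V)) (_ : I ≤ P.asIdeal), Order.height P

variable {V}

/-- A `k`-matching of `G`, recorded as `k` edges (ordered pairs) with pairwise
disjoint vertex sets. -/
def IsMatchingOn (G : SimpleGraph V) {k : ℕ} (f : Fin k → V × V) : Prop :=
  (∀ i, G.Adj (f i).1 (f i).2) ∧
  Pairwise fun i j => ({(f i).1, (f i).2} : Set V) ∩ {(f j).1, (f j).2} = ∅

variable (V)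

/-- The matching number `ν(G)`. -/
def matchingNumber (G : SimpleGraph V) : ℕ :=
  sSup {k : ℕ | ∃ f : Fin k → V × V, IsMatchingOn G f}

/-- The edge ideal `I(G)`. -/
def edgeIdeal (G : SimpleGraph V) : Ideal (Poly K V) :=
  Ideal.span {p : Poly K V | ∃ a b : V, G.Adj a b ∧ p = X a * X b}

/-- The `k`-th matching power `I(G)^{[k]}`, generated by the products of the
edges of the `k`-matchings of `G`. -/
def matchPow (G : SimpleGraph V) (k : ℕ) : Ideal (Poly K V) :=
  Ideal.span {p : Poly K V | ∃ f : Fin k → V × V, IsMatchingOn G f ∧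
    p = ∏ i, (X (f i).1 * X (f i).2)}

/-- The squarefree Veronese ideal `𝔪^{[k]}`, generated by all squarefree
monomials of degree `k`. -/
def sqVeronese (k : ℕ) : Ideal (Poly K V) :=
  Ideal.span {p : Poly K V | ∃ s : Finset V, s.card = k ∧ p = ∏ i ∈ s, X i}

variable {V}

/-- Deletion of a set of vertices (keeping the ambient vertex set, so that all
edge ideals live in the same polynomial ring). -/
def delVerts (G : SimpleGraph V) (W : Set V) : SimpleGraph V where
  Adj a b := G.Adj a b ∧ a ∉ W ∧ b ∉ W
  symm := ⟨fun a b h => ⟨h.1.symm, h.2.2, h.2.1⟩⟩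
  loopless := ⟨fun a h => G.loopless.irrefl a h.1⟩

/-- `G` has a perfect matching. -/
def HasPerfectMatching (G : SimpleGraph V) : Prop :=
  ∃ (k : ℕ) (f : Fin k → V × V), IsMatchingOn G f ∧
    ∀ v : V, ∃ i, v = (f i).1 ∨ v = (f i).2

/-- `G` is a Cohen-Macaulay forest: a forest whose edge ideal is Cohen-Macaulay. -/
def IsCMForest (G : SimpleGraph V) : Prop :=
  G.IsAcyclic ∧ IsCM K V (edgeIdeal K V G)

end Paper

/-!
A set `W` of `2k - 1` vertices contains no `k`-matching, so sending the variables outside `W`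
to zero kills `I(G)^{[k]}` and `S/I(G)^{[k]}` surjects onto `K[x_w : w ∈ W]`, whence
`dim S/I(G)^{[k]} ≥ 2k - 1`. Conversely, a prime `P ⊇ I(G)^{[k]}` contains a variable from at
least `n - k + 1` edges of the perfect matching, since otherwise `k` edges avoiding `P` form a
`k`-matching whose monomial lies in `P`. So every chain of primes over `I(G)^{[k]}` lies over an
ideal generated by `n - k + 1` variables, and its length is at most `2n - (n - k + 1)`.
-/

lemma ringKrullDim_quotient_le_of_forall_isPrime {R : Type*} [CommRing R] {I : Ideal R}
    {d : WithBot ℕ∞}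
    (h : ∀ P : Ideal R, P.IsPrime → I ≤ P → ∃ J ≤ P, ringKrullDim (R ⧸ J) ≤ d) :
    ringKrullDim (R ⧸ I) ≤ d := by
  rw [ringKrullDim_quotient, Order.krullDim, iSup_le_iff]
  intro l
  obtain ⟨J, hJP, hJd⟩ := h _ l.head.1.isPrime l.head.2
  let l' : LTSeries (PrimeSpectrum.zeroLocus (R := R) J) :=
    { length := l.length
      toFun := fun i => ⟨(l i).1, hJP.trans (l.monotone (Fin.zero_le i))⟩
      step := l.step }
  exact (Order.LTSeries.length_le_krullDim l').trans ((ringKrullDim_quotient J).symm.le.trans hJd)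

namespace MvPolynomial

variable {K σ : Type*} [Field K]

lemma ringKrullDim_eq_natCard [Finite σ] : ringKrullDim (MvPolynomial σ K) = Nat.card σ := by
  simp [ringKrullDim_eq_zero_of_field]

lemma card_le_ringKrullDim_quotient {W : Finset σ} {I : Ideal (MvPolynomial σ K)}
    (hI : I ≤ RingHom.ker
      (killCompl (R := K) Subtype.val_injective : _ →ₐ[K] MvPolynomial W K)) :
    (W.card : WithBot ℕ∞) ≤ ringKrullDim (MvPolynomial σ K ⧸ I) := by
  rw [← Fintype.card_coe, ← Nat.card_eq_fintype_card, ← ringKrullDim_eq_natCard (K := K)]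
  refine ringKrullDim_le_of_surjective (Ideal.Quotient.lift I _ hI) ?_
  exact Ideal.Quotient.lift_surjective_of_surjective _ _ fun p =>
    ⟨rename Subtype.val p, killCompl_rename_app _ p⟩

lemma ringKrullDim_quotient_span_X_le [Fintype σ] (W : Finset σ) :
    ringKrullDim (MvPolynomial σ K ⧸ Ideal.span (X '' (W : Set σ) : Set (MvPolynomial σ K)))
      ≤ (Fintype.card σ - W.card : ℕ) := by
  classical
  set J := Ideal.span (X '' (W : Set σ) : Set (MvPolynomial σ K))
  let φ := (Ideal.Quotient.mkₐ K J).comp (rename (Subtype.val : {v // v ∉ W} → σ))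
  have hX : ∀ v, Ideal.Quotient.mkₐ K J (X v) ∈ φ.range := by
    intro v
    by_cases hv : v ∈ W
    · rw [Ideal.Quotient.mkₐ_eq_mk, Ideal.Quotient.eq_zero_iff_mem.mpr
        (Ideal.subset_span (Set.mem_image_of_mem X hv))]
      exact zero_mem _
    · exact φ.mem_range.mpr ⟨X ⟨v, hv⟩, by simp [φ]⟩
  have hφ : Function.Surjective φ := by
    intro q
    obtain ⟨p, rfl⟩ := Ideal.Quotient.mkₐ_surjective K J q
    refine φ.mem_range.mp ?_
    induction p using MvPolynomial.induction_on with
    | C a => exact ⟨C a, by simp [φ]⟩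
    | add p q hp hq => simpa using add_mem hp hq
    | mul_X p v hp => simpa using mul_mem hp (hX v)
  calc ringKrullDim (MvPolynomial σ K ⧸ J)
      ≤ ringKrullDim (MvPolynomial {v // v ∉ W} K) :=
        ringKrullDim_le_of_surjective φ.toRingHom hφ
    _ = (Fintype.card σ - W.card : ℕ) := by
        rw [ringKrullDim_eq_natCard, Nat.card_eq_fintype_card, Fintype.card_subtype_compl,
          Fintype.card_coe]

end MvPolynomial

lemma WithBot.ENat.eq_or_eq_of_le_of_le_add_one {a : ℕ} {D : WithBot ℕ∞}
    (h₁ : (a : WithBot ℕ∞) ≤ D) (h₂ : D ≤ (a + 1 : ℕ)) :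
    D = a ∨ D = (a + 1 : ℕ) := by
  induction D using WithBot.recBotCoe with
  | bot => simp at h₁
  | coe D =>
    induction D using ENat.recTopCoe with
    | top => exact absurd (WithBot.coe_le_coe.mp h₂) (by simp)
    | coe m =>
      norm_cast at h₁ h₂ ⊢
      omega

namespace Paper

open Finset

section Matching

variable {V : Type} {G : SimpleGraph V} {n k : ℕ} {f : Fin n → V × V}

lemma IsMatchingOn.comp_injective (hf : IsMatchingOn G f) {e : Fin k → Fin n}
    (he : Function.Injective e) : IsMatchingOn G (f ∘ e) :=
  ⟨fun i => hf.1 (e i), fun _ _ hij => hf.2 (he.ne hij)⟩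

lemma IsMatchingOn.card_endpoints [DecidableEq V] (hf : IsMatchingOn G f) :
    #(univ.biUnion fun i => ({(f i).1, (f i).2} : Finset V)) = 2 * n := by
  rw [card_biUnion]
  · simp [card_pair (hf.1 _).ne, mul_comm]
  · intro i _ j _ hij
    rw [Function.onFun, ← disjoint_coe, Set.disjoint_iff_inter_eq_empty]
    simpa using hf.2 hij

lemma IsMatchingOn.exists_endpoint_notMem (hf : IsMatchingOn G f) {W : Finset V}
    (hW : #W < 2 * n) : ∃ i, (f i).1 ∉ W ∨ (f i).2 ∉ W := by
  classical
  by_contra! h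
  have hsub : (univ.biUnion fun i => ({(f i).1, (f i).2} : Finset V)) ⊆ W :=
    biUnion_subset.mpr fun i _ => by simp [insert_subset_iff, h i]
  have := card_le_card hsub
  rw [hf.card_endpoints] at this
  omega

lemma IsMatchingOn.card_filter_endpoint_mem_le [DecidableEq V] (hf : IsMatchingOn G f)
    (W : Finset V) : #{i | (f i).1 ∈ W ∨ (f i).2 ∈ W} ≤ #W := by
  let g i := if (f i).1 ∈ W then (f i).1 else (f i).2
  have hg : ∀ i, g i ∈ ({(f i).1, (f i).2} : Set V) := fun i => by
    unfold g; split_ifs <;> simp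
  refine card_le_card_of_injOn g (fun i hi => ?_) (fun i _ j _ hij => ?_)
  · simp only [coe_filter, mem_univ, true_and, Set.mem_ofPred_eq] at hi
    unfold g
    split_ifs with h
    exacts [h, hi.resolve_left h]
  · by_contra hne
    have hmem : g i ∈ ({(f i).1, (f i).2} : Set V) ∩ {(f j).1, (f j).2} :=
      ⟨hg i, hij ▸ hg j⟩
    simp [hf.2 hne] at hmem

end Matching

section

variable (K : Type) [Field K] {V : Type} {G : SimpleGraph V} {n k : ℕ}

lemma matchPow_le_ker_killCompl {W : Finset V} (hW : #W < 2 * k) :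
    matchPow K V G k ≤
      RingHom.ker (killCompl (R := K) Subtype.val_injective : _ →ₐ[K] MvPolynomial W K) := by
  rw [matchPow, Ideal.span_le]
  rintro _ ⟨f, hf, rfl⟩
  obtain ⟨i, hi⟩ := hf.exists_endpoint_notMem hW
  rw [SetLike.mem_coe, RingHom.mem_ker, map_prod]
  refine prod_eq_zero (mem_univ i) ?_
  rcases hi with h | h <;> simp [killCompl, h]

variable {K} [Fintype V]

lemma le_ringKrullDim_quotient_matchPow {m : ℕ} (hm : m < 2 * k) (hmV : m ≤ Fintype.card V) :
    (m : WithBot ℕ∞) ≤ ringKrullDim (Poly K V ⧸ matchPow K V G k) := by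
  obtain ⟨W, -, rfl⟩ := exists_subset_card_eq (s := univ) (by simpa using hmV)
  exact card_le_ringKrullDim_quotient (matchPow_le_ker_killCompl K hm)

lemma IsMatchingOn.exists_X_mem_of_matchPow_le {f : Fin n → V × V} (hf : IsMatchingOn G f)
    {P : Ideal (Poly K V)} [P.IsPrime] (hP : matchPow K V G k ≤ P) :
    ∃ W : Finset V, n < k + #W ∧ ∀ v ∈ W, X v ∈ P := by
  classical
  set W : Finset V := {v | X v ∈ P}
  refine ⟨W, ?_, fun v hv => (mem_filter.mp hv).2⟩
  by_contra! hle
  have hmiss : k ≤ #{i | ¬((f i).1 ∈ W ∨ (f i).2 ∈ W)} := by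
    have hsplit :=
      card_filter_add_card_filter_not (s := univ) fun i => (f i).1 ∈ W ∨ (f i).2 ∈ W
    rw [card_univ, Fintype.card_fin] at hsplit
    have := hf.card_filter_endpoint_mem_le W
    omega
  obtain ⟨t, hts, htk⟩ := exists_subset_card_eq hmiss
  set e := t.orderEmbOfFin htk
  have hprod : ∏ i, (X (f (e i)).1 * X (f (e i)).2) ∈ P :=
    hP (Ideal.subset_span ⟨f ∘ e, hf.comp_injective e.injective, rfl⟩)
  obtain ⟨i, -, hi⟩ := Ideal.IsPrime.prod_mem_iff.mp hprod
  have hmissed := hts (t.orderEmbOfFin_mem htk i)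
  simp only [W, mem_filter, mem_univ, true_and, not_or] at hmissed
  rcases ‹P.IsPrime›.mem_or_mem hi with h | h
  exacts [hmissed.1 h, hmissed.2 h]

lemma ringKrullDim_quotient_matchPow_le {f : Fin n → V × V} (hf : IsMatchingOn G f) :
    ringKrullDim (Poly K V ⧸ matchPow K V G k) ≤ (Fintype.card V + k - (n + 1) : ℕ) := by
  refine ringKrullDim_quotient_le_of_forall_isPrime fun P _ hIP => ?_
  obtain ⟨W, hW, hWP⟩ := hf.exists_X_mem_of_matchPow_le hIP
  refine ⟨_, Ideal.span_le.mpr ?_, (ringKrullDim_quotient_span_X_le W).trans ?_⟩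
  · rintro _ ⟨v, hv, rfl⟩
    exact hWP v hv
  · exact WithBot.coe_le_coe.mpr (Nat.cast_le.mpr (by omega))

lemma ringKrullDim_quotient_matchPow_bounds (hcard : Fintype.card V = 2 * n)
    {f : Fin n → V × V} (hf : IsMatchingOn G f) (hk : 1 ≤ k) (hkn : k ≤ n) :
    ((2 * k - 1 : ℕ) : WithBot ℕ∞) ≤ ringKrullDim (Poly K V ⧸ matchPow K V G k) ∧
      ringKrullDim (Poly K V ⧸ matchPow K V G k) ≤ (n + k - 1 : ℕ) := by
  refine ⟨le_ringKrullDim_quotient_matchPow (by omega) (by omega),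
    (ringKrullDim_quotient_matchPow_le hf).trans_eq ?_⟩
  rw [hcard, show 2 * n + k - (n + 1) = n + k - 1 by omega]

end

variable (K : Type) [Field K] {V : Type} [Fintype V] [DecidableEq V]

theorem statement_9 (G : SimpleGraph V) (n : ℕ)
    (hcard : Fintype.card V = 2 * n)
    (f : Fin n → V × V) (hf : IsMatchingOn G f) :
    (∀ k : ℕ, 1 ≤ k → k ≤ n →
      (((2 * k - 1 : ℕ) : ℕ∞) : WithBot ℕ∞) ≤ ringKrullDim (Poly K V ⧸ matchPow K V G k) ∧
      ringKrullDim (Poly K V ⧸ matchPow K V G k) ≤ (((n + k - 1 : ℕ) : ℕ∞) : WithBot ℕ∞)) ∧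
    (2 ≤ n →
      (ringKrullDim (Poly K V ⧸ matchPow K V G (n - 1)) = (((2 * n - 3 : ℕ) : ℕ∞) : WithBot ℕ∞) ∨
       ringKrullDim (Poly K V ⧸ matchPow K V G (n - 1)) = (((2 * n - 2 : ℕ) : ℕ∞) : WithBot ℕ∞))) := by
  refine ⟨fun k hk hkn => ringKrullDim_quotient_matchPow_bounds hcard hf hk hkn, fun hn => ?_⟩
  obtain ⟨hlo, hhi⟩ := ringKrullDim_quotient_matchPow_bounds (K := K) (k := n - 1) hcard hf
    (by omega) (by omega)
  rw [show 2 * (n - 1) - 1 = 2 * n - 3 by omega] at hlo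
  rw [show n + (n - 1) - 1 = 2 * n - 3 + 1 by omega] at hhi
  have h := WithBot.ENat.eq_or_eq_of_le_of_le_add_one hlo hhi
  rw [show 2 * n - 3 + 1 = 2 * n - 2 by omega] at h
  exact h

end Paper
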